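/- arXiv:1703.06695 — 2 statements merged into one kernel-verified Lean document; each statement's English description precedes it below -/
import Mathlib

section
/- Let σ : ℂ^n → ℂ^n be a polynomial map with σ_i(z) = z_i + g_i(z), where each g_i contains only nonlinear i-th resonant monomials (monomials z^α with m·α = m_i and |α| ≥ 2). Then σ is bijective (a polynomial automorphism of ℂ^n), and its inverse τ = σ^{-1} has components τ_i(ζ) = ζ_i + h_i(ζ), where each h_i contains only nonlinear i-th resonant monomials. -/
open MvPolynomial

namespace ResonantAux

variable {n : ℕ}

/-- every monomial of `p` has weighted degree exactly `w` and total degree at least `d`. -/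
def Good (m : Fin n → ℕ) (w d : ℕ) (p : MvPolynomial (Fin n) ℂ) : Prop :=
  ∀ α ∈ p.support, (∑ j, m j * α j) = w ∧ d ≤ ∑ j, α j

variable {m : Fin n → ℕ}

theorem good_zero (w d : ℕ) : Good m w d 0 := by
  intro α hα; simp at hα

theorem good_mono {w d d' : ℕ} (h : d' ≤ d) {p} (hp : Good m w d p) : Good m w d' p :=
  fun α hα => ⟨(hp α hα).1, le_trans h (hp α hα).2⟩

theorem good_neg {w d : ℕ} {p} (hp : Good m w d p) : Good m w d (-p) := by
  intro α hα; rw [support_neg] at hα; exact hp α hα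

theorem good_add {w d : ℕ} {p q} (hp : Good m w d p) (hq : Good m w d q) :
    Good m w d (p + q) := by
  intro α hα
  rcases Finset.mem_union.mp (MvPolynomial.support_add hα) with h | h
  · exact hp α h
  · exact hq α h

theorem good_mul {w₁ d₁ w₂ d₂ : ℕ} {p q} (hp : Good m w₁ d₁ p) (hq : Good m w₂ d₂ q) :
    Good m (w₁ + w₂) (d₁ + d₂) (p * q) := by
  intro α hα
  have h := MvPolynomial.support_mul p q hα
  rw [Finset.mem_add] at h
  obtain ⟨β, hβ, γ, hγ, rfl⟩ := h
  have h1 := hp β hβ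
  have h2 := hq γ hγ
  constructor
  · calc (∑ j, m j * (β + γ) j) = (∑ j, m j * β j) + ∑ j, m j * γ j := by
          simp [Finsupp.add_apply, mul_add, Finset.sum_add_distrib]
      _ = w₁ + w₂ := by rw [h1.1, h2.1]
  · calc d₁ + d₂ ≤ (∑ j, β j) + ∑ j, γ j := add_le_add h1.2 h2.2
      _ = ∑ j, (β + γ) j := by simp [Finsupp.add_apply, Finset.sum_add_distrib]

theorem good_C (c : ℂ) : Good m 0 0 (C c) := by
  intro α hα
  rw [mem_support_iff, coeff_C] at hα
  by_cases h : (0 : Fin n →₀ ℕ) = α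
  · subst h; simp
  · simp [h] at hα

theorem good_one : Good m 0 0 (1 : MvPolynomial (Fin n) ℂ) := by
  simpa using good_C (m := m) 1

theorem good_pow {w d : ℕ} {p} (hp : Good m w d p) : ∀ k, Good m (k * w) (k * d) (p ^ k)
  | 0 => by simpa using good_one (m := m)
  | (k + 1) => by
      have h := good_mul (good_pow hp k) hp
      rw [← pow_succ] at h
      rw [Nat.succ_mul, Nat.succ_mul]
      exact h

theorem good_prod {ι : Type*} (s : Finset ι) (w d : ι → ℕ) (f : ι → MvPolynomial (Fin n) ℂ)
    (h : ∀ i ∈ s, Good m (w i) (d i) (f i)) :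
    Good m (∑ i ∈ s, w i) (∑ i ∈ s, d i) (∏ i ∈ s, f i) := by
  classical
  induction s using Finset.induction_on with
  | empty => simpa using good_one (m := m)
  | @insert a s ha ih =>
      rw [Finset.sum_insert ha, Finset.sum_insert ha, Finset.prod_insert ha]
      exact good_mul (h a (Finset.mem_insert_self a s))
        (ih fun i hi => h i (Finset.mem_insert_of_mem hi))

theorem good_X (j : Fin n) : Good m (m j) 1 (X j) := by
  intro α hα
  rw [support_X, Finset.mem_singleton] at hα
  subst hα
  constructor
  · simp [Finsupp.single_apply, mul_ite, Finset.sum_ite_eq]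
  · simp [Finsupp.single_apply, Finset.sum_ite_eq]

theorem bind₁_eq (f : Fin n → MvPolynomial (Fin n) ℂ) (p : MvPolynomial (Fin n) ℂ) :
    bind₁ f p = eval₂ C f p := by
  rw [bind₁, aeval_def, algebraMap_eq]

theorem good_bind {wi : ℕ} {p : MvPolynomial (Fin n) ℂ} (hp : Good m wi 2 p)
    {f : Fin n → MvPolynomial (Fin n) ℂ} (hf : ∀ j, Good m (m j) 1 (f j)) :
    Good m wi 2 (bind₁ f p) := by
  classical
  rw [bind₁_eq, eval₂_eq']
  intro α hα
  have h := MvPolynomial.support_sum hα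
  rw [Finset.mem_biUnion] at h
  obtain ⟨d, hd, hαd⟩ := h
  have hterm : Good m (0 + ∑ i, d i * m i) (0 + ∑ i, d i * 1)
      (C (p.coeff d) * ∏ i, f i ^ d i) :=
    good_mul (good_C _) (good_prod Finset.univ (fun i => d i * m i) (fun i => d i * 1)
      (fun i => f i ^ d i) (fun i _ => good_pow (hf i) (d i)))
  have e1 : (0 + ∑ i, d i * m i) = wi := by
    rw [zero_add, ← (hp d hd).1]
    exact Finset.sum_congr rfl fun i _ => mul_comm _ _
  have e2 : 2 ≤ 0 + ∑ i, d i * 1 := by simpa using (hp d hd).2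
  rw [e1] at hterm
  exact good_mono e2 hterm α hαd

theorem eval₂_congr_on {S : Type*} [CommSemiring S] (c : ℂ →+* S)
    {p : MvPolynomial (Fin n) ℂ} {Q : Fin n → Prop}
    (hp : ∀ α ∈ p.support, ∀ j, α j ≠ 0 → Q j)
    {x y : Fin n → S} (hxy : ∀ j, Q j → x j = y j) :
    eval₂ c x p = eval₂ c y p := by
  rw [eval₂_eq, eval₂_eq]
  apply Finset.sum_congr rfl
  intro d hd
  congr 1
  apply Finset.prod_congr rfl
  intro j hj
  rw [hxy j (hp d hd j (Finsupp.mem_support_iff.mp hj))]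

/-- variables occurring in a nonlinear resonant monomial have strictly smaller weight -/
theorem small (hpos : ∀ i, 0 < m i) (i : Fin n) {α : Fin n →₀ ℕ}
    (h1 : (∑ j, m j * α j) = m i) (h2 : 2 ≤ ∑ j, α j) {j : Fin n} (hj : α j ≠ 0) :
    m j < m i := by
  have hsplit : m j * α j + ∑ l ∈ Finset.univ.erase j, m l * α l = m i := by
    rw [← h1]
    exact Finset.add_sum_erase _ (fun l => m l * α l) (Finset.mem_univ j)
  have hsplit2 : α j + ∑ l ∈ Finset.univ.erase j, α l = ∑ l, α l :=
    Finset.add_sum_erase _ (fun l => α l) (Finset.mem_univ j)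
  rcases Nat.lt_or_ge (α j) 2 with h | h
  · -- α j = 1
    have haj : α j = 1 := by omega
    have hT : 1 ≤ ∑ l ∈ Finset.univ.erase j, α l := by omega
    have hS : (∑ l ∈ Finset.univ.erase j, α l) ≤ ∑ l ∈ Finset.univ.erase j, m l * α l :=
      Finset.sum_le_sum fun l _ => by
        have := hpos l; calc α l = 1 * α l := (one_mul _).symm
          _ ≤ m l * α l := Nat.mul_le_mul_right _ this
    have hm : m j * α j = m j := by rw [haj, mul_one]
    have := hpos j
    omega
  · -- α j ≥ 2
    have : m j * 2 ≤ m j * α j := Nat.mul_le_mul_left _ h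
    have := hpos j
    omega


/-- Picard iteration for the inverse's nonlinear parts. -/
noncomputable def Fa (g : Fin n → MvPolynomial (Fin n) ℂ) : ℕ → Fin n → MvPolynomial (Fin n) ℂ
  | 0 => fun _ => 0
  | (k + 1) => fun i => - (bind₁ (fun j => X j + Fa g k j) (g i))

variable {g : Fin n → MvPolynomial (Fin n) ℂ}

theorem Fa_succ (g : Fin n → MvPolynomial (Fin n) ℂ) (k : ℕ) (i : Fin n) :
    Fa g (k + 1) i = - (bind₁ (fun j => X j + Fa g k j) (g i)) := rfl

theorem good_Fa (hg : ∀ i, Good m (m i) 2 (g i)) :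
    ∀ k i, Good m (m i) 2 (Fa g k i)
  | 0, i => good_zero _ _
  | (k + 1), i =>
      good_neg (good_bind (hg i) fun j =>
        good_add (good_X j) (good_mono one_le_two (good_Fa hg k j)))

theorem Fa_stab (hpos : ∀ i, 0 < m i) (hg : ∀ i, Good m (m i) 2 (g i)) :
    ∀ k i, m i ≤ k → Fa g (k + 1) i = Fa g k i := by
  intro k
  induction k with
  | zero => intro i hi; exact absurd hi (by have := hpos i; omega)
  | succ k ih =>
      intro i hi
      rw [Fa_succ, Fa_succ]
      congr 1
      rw [bind₁_eq, bind₁_eq]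
      refine eval₂_congr_on C (Q := fun j => m j < m i)
        (fun α hα j hj => small hpos i ((hg i) α hα).1 ((hg i) α hα).2 hj) ?_
      intro j hj
      rw [ih j (by omega)]

end ResonantAux

open ResonantAux


/-- if `σ z i = z i + g_i(z)` where each `g_i` contains only nonlinear `i`-th
resonant monomials, then `σ : ℂⁿ → ℂⁿ` is bijective and its inverse `τ` has components
`τ_i(ζ) = ζ_i + h_i(ζ)` with each `h_i` containing only nonlinear `i`-th resonant monomials. -/
theorem resonant_triangular_map_bijective (n : ℕ) (m : Fin n → ℕ)
    (hpos : ∀ i, 0 < m i) (hmono : Monotone m)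
    (g : Fin n → MvPolynomial (Fin n) ℂ)
    (hg : ∀ i, ∀ α ∈ (g i).support, (∑ j, m j * α j) = m i ∧ 2 ≤ ∑ j, α j)
    (σ : (Fin n → ℂ) → (Fin n → ℂ))
    (hσ : ∀ z i, σ z i = z i + eval z (g i)) :
    Function.Bijective σ ∧
    ∃ h : Fin n → MvPolynomial (Fin n) ℂ,
      (∀ i, ∀ α ∈ (h i).support, (∑ j, m j * α j) = m i ∧ 2 ≤ ∑ j, α j) ∧
      Function.LeftInverse (fun ζ i => ζ i + eval ζ (h i)) σ ∧
      Function.RightInverse (fun ζ i => ζ i + eval ζ (h i)) σ := by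
  classical
  set K : ℕ := Finset.univ.sup m with hK
  set h : Fin n → MvPolynomial (Fin n) ℂ := fun i => Fa g K i with hh
  have hgood : ∀ i, Good m (m i) 2 (h i) := fun i => good_Fa hg K i
  have hfix : ∀ i, h i = - (bind₁ (fun j => X j + h j) (g i)) := by
    intro i
    have hs := Fa_stab hpos hg K i (Finset.le_sup (Finset.mem_univ i))
    rw [Fa_succ] at hs
    exact hs.symm
  -- the candidate inverse
  set τ : (Fin n → ℂ) → (Fin n → ℂ) := fun ζ i => ζ i + eval ζ (h i) with hτ
  have evalh : ∀ ζ i, eval ζ (h i) = - eval (τ ζ) (g i) := by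
    intro ζ i
    rw [hfix i, map_neg]
    congr 1
    have : eval ζ (bind₁ (fun j => X j + h j) (g i))
        = eval (fun j => eval ζ (X j + h j)) (g i) :=
      eval₂Hom_bind₁ (RingHom.id ℂ) ζ (fun j => X j + h j) (g i)
    rw [this]
    have e : (fun j => eval ζ (X j + h j)) = τ ζ := by
      funext j
      simp [hτ]
    rw [e]
  have hright : Function.RightInverse τ σ := by
    intro ζ
    funext i
    rw [hσ]
    show (ζ i + eval ζ (h i)) + eval (τ ζ) (g i) = ζ i
    rw [evalh ζ i]
    ring
  have hinj : Function.Injective σ := by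
    intro a b hab
    have key : ∀ k j, m j ≤ k → a j = b j := by
      intro k
      induction k with
      | zero => intro j hj; exact absurd hj (by have := hpos j; omega)
      | succ k ih =>
          intro j hj
          have e1 : a j + eval a (g j) = b j + eval b (g j) := by
            rw [← hσ a j, ← hσ b j, hab]
          have e2 : eval a (g j) = eval b (g j) := by
            rw [← eval₂_id (g := a), ← eval₂_id (g := b)]
            refine eval₂_congr_on (RingHom.id ℂ) (Q := fun l => m l < m j)
              (fun α hα l hl => small hpos j ((hg j) α hα).1 ((hg j) α hα).2 hl) ?_
            intro l hl
            exact ih l (by omega)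
          rw [e2] at e1
          exact add_right_cancel e1
    funext j
    exact key (m j) j le_rfl
  have hleft : Function.LeftInverse τ σ := fun z => hinj (hright (σ z))
  exact ⟨⟨hinj, hright.surjective⟩, h, hgood, hleft, hright⟩
end

section
/- A polynomial self-map σ of ℂ^n with σ(0) = 0 whose Jacobian matrix is I_n + N(z) with N(z) strictly block lower triangular (blocks as above) is a polynomial automorphism of ℂ^n whose inverse is also polynomial, and the Jacobian of σ^{-1} has the same form I_n + Ñ(ζ) with Ñ strictly block lower triangular. -/
/-!
In characteristic zero the Jacobian condition says exactly that each `P i - X i` only involves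
variables of strictly lower block. The inverse substitution is then found by solving
`Q i = X i - (P i - X i)(Q)` block by block, by well-founded recursion on the block index; it has
the same shape, and the two substitutions compose to the identity in both orders, so the
polynomial maps they induce are mutually inverse.
-/

open MvPolynomial

namespace MvPolynomial

variable {R σ ι : Type*} [CommRing R] [LinearOrder ι]

theorem notMem_vars_of_pderiv_eq_zero [CharZero R] [NoZeroDivisors R] {p : MvPolynomial σ R}
    {j : σ} (h : pderiv j p = 0) : j ∉ p.vars := by
  intro hj
  obtain ⟨d, hd, hdj⟩ := (mem_vars_iff_mem_support j).mp hj
  have hcancel : d - Finsupp.single j 1 + Finsupp.single j 1 = d :=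
    tsub_add_cancel_of_le (Finsupp.single_le_iff.mpr (Nat.one_le_iff_ne_zero.mpr
      (Finsupp.mem_support_iff.mp hdj)))
  have hcoeff := coeff_pderiv (i := j) p (d - Finsupp.single j 1)
  rw [h, hcancel, coeff_zero] at hcoeff
  exact mem_support_iff.mp hd
    ((mul_eq_zero.mp hcoeff.symm).resolve_right (Nat.cast_add_one_ne_zero _))

theorem bind₁_congr_vars {τ : Type*} {f g : σ → MvPolynomial τ R} {p : MvPolynomial σ R}
    (h : ∀ i ∈ p.vars, f i = g i) : bind₁ f p = bind₁ g p :=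
  eval₂Hom_congr' rfl (fun i hi _ => h i hi) rfl

theorem leftInverse_eval_of_bind₁_eq_X {P Q : σ → MvPolynomial σ R}
    (h : ∀ i, bind₁ P (Q i) = X i) :
    Function.LeftInverse (fun ζ i => eval ζ (Q i)) (fun z i => eval z (P i)) := by
  intro z
  funext i
  simpa [aeval_bind₁] using congrArg (aeval z) (h i)

theorem constantCoeff_eq_zero_of_bind₁_eq_X {P Q : σ → MvPolynomial σ R}
    (h : ∀ i, bind₁ P (Q i) = X i) (hP0 : ∀ i, constantCoeff (P i) = 0) (i : σ) :
    constantCoeff (Q i) = 0 := by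
  have hQ0 := congrFun (leftInverse_eval_of_bind₁_eq_X h 0) i
  simp only [eval_zero, hP0] at hQ0
  rwa [← Pi.zero_def, eval_zero, Pi.zero_apply] at hQ0

def IsUnitriangular (lvl : σ → ι) (P : σ → MvPolynomial σ R) : Prop :=
  ∀ i, ∀ j ∈ (P i - X i).vars, lvl j < lvl i

theorem pderiv_eq_ite_iff_isUnitriangular [DecidableEq σ] [CharZero R] [NoZeroDivisors R]
    (lvl : σ → ι) (P : σ → MvPolynomial σ R) :
    (∀ i j, lvl i ≤ lvl j → pderiv j (P i) = if i = j then 1 else 0) ↔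
      IsUnitriangular lvl P := by
  have hsub (i j : σ) :
      pderiv j (P i) = (if i = j then 1 else 0) ↔ pderiv j (P i - X i) = 0 := by
    rw [map_sub, pderiv_X, Pi.single_apply, sub_eq_zero]
  simp only [hsub]
  constructor
  · intro h i j hj
    by_contra! hle
    exact notMem_vars_of_pderiv_eq_zero (h i j hle) hj
  · intro h i j hle
    exact pderiv_eq_zero_of_notMem_vars fun hj => (h i j hj).not_ge hle

section TriangularInverse

variable [WellFoundedLT ι] (lvl : σ → ι) (P : σ → MvPolynomial σ R)

/- The guard `lvl j < lvl i` only makes the recursion well founded: for unitriangular `P` it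
always holds on the variables of `P i - X i` (see `triangularInverse_eq`). -/
noncomputable def triangularInverse : σ → MvPolynomial σ R :=
  (InvImage.wf lvl wellFounded_lt).fix fun i Q =>
    X i - bind₁ (fun j => if h : lvl j < lvl i then Q j h else 0) (P i - X i)

variable {lvl P}

theorem triangularInverse_eq (hP : IsUnitriangular lvl P) (i : σ) :
    triangularInverse lvl P i = X i - bind₁ (triangularInverse lvl P) (P i - X i) := by
  rw [triangularInverse, WellFounded.fix_eq]
  congr 1
  exact bind₁_congr_vars fun j hj => dif_pos (hP i j hj)

theorem isUnitriangular_triangularInverse (hP : IsUnitriangular lvl P) :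
    IsUnitriangular lvl (triangularInverse lvl P) := by
  classical
  intro i
  rcases subsingleton_or_nontrivial R with _ | _
  · simp [Subsingleton.elim (triangularInverse lvl P i - X i) 0]
  induction i using (InvImage.wf lvl wellFounded_lt).induction with
  | _ i ih =>
  intro j hj
  rw [triangularInverse_eq hP, sub_sub_cancel_left, vars_neg] at hj
  obtain ⟨m, hm, hjm⟩ := Finset.mem_biUnion.mp (vars_bind₁ _ _ hj)
  have hmi := hP i m hm
  rw [← sub_add_cancel (triangularInverse lvl P m) (X m)] at hjm
  rcases Finset.mem_union.mp (vars_add_subset _ _ hjm) with hj' | hj'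
  · exact (ih m hmi j hj').trans hmi
  · rw [vars_X, Finset.mem_singleton] at hj'
    exact hj' ▸ hmi

theorem bind₁_triangularInverse_self (hP : IsUnitriangular lvl P) (i : σ) :
    bind₁ (triangularInverse lvl P) (P i) = X i := by
  rw [← sub_add_cancel (P i) (X i), map_add, bind₁_X_right, triangularInverse_eq hP]
  ring

theorem bind₁_self_triangularInverse (hP : IsUnitriangular lvl P) (i : σ) :
    bind₁ P (triangularInverse lvl P i) = X i := by
  induction i using (InvImage.wf lvl wellFounded_lt).induction with
  | _ i ih =>
  have hsub : bind₁ (fun j => bind₁ P (triangularInverse lvl P j)) (P i - X i) = P i - X i := by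
    rw [bind₁_congr_vars fun j hj => ih j (hP i j hj), bind₁_X_left, AlgHom.id_apply]
  rw [triangularInverse_eq hP, map_sub, bind₁_X_right, bind₁_bind₁, hsub]
  ring

end TriangularInverse

end MvPolynomial

theorem unipotent_jacobian_polynomial_automorphism_general (n l : ℕ) (b : Fin n → Fin l)
    (P : Fin n → MvPolynomial (Fin n) ℂ)
    (hP0 : ∀ i, constantCoeff (P i) = 0)
    (hJac : ∀ i j, b i ≤ b j → pderiv j (P i) = if i = j then 1 else 0) :
    Function.Bijective (fun (z : Fin n → ℂ) (i : Fin n) => eval z (P i)) ∧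
    ∃ Q : Fin n → MvPolynomial (Fin n) ℂ,
      (∀ i, constantCoeff (Q i) = 0) ∧
      Function.LeftInverse (fun (ζ : Fin n → ℂ) (i : Fin n) => eval ζ (Q i))
        (fun (z : Fin n → ℂ) (i : Fin n) => eval z (P i)) ∧
      Function.RightInverse (fun (ζ : Fin n → ℂ) (i : Fin n) => eval ζ (Q i))
        (fun (z : Fin n → ℂ) (i : Fin n) => eval z (P i)) ∧
      (∀ i j, b i ≤ b j → pderiv j (Q i) = if i = j then 1 else 0) := by
  have hP := (pderiv_eq_ite_iff_isUnitriangular b P).mp hJac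
  set Q := triangularInverse b P
  have hQP : ∀ i, bind₁ P (Q i) = X i := bind₁_self_triangularInverse hP
  have hPQ : ∀ i, bind₁ Q (P i) = X i := bind₁_triangularInverse_self hP
  have hleft := leftInverse_eval_of_bind₁_eq_X hQP
  have hright := leftInverse_eval_of_bind₁_eq_X hPQ
  refine ⟨⟨hleft.injective, hright.surjective⟩, Q, constantCoeff_eq_zero_of_bind₁_eq_X hQP hP0,
    hleft, hright, ?_⟩
  exact (pderiv_eq_ite_iff_isUnitriangular b Q).mpr (isUnitriangular_triangularInverse hP)

/-- a polynomial self-map `σ` of `ℂⁿ` with `σ(0) = 0` whose Jacobian is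
`I + N(z)` with `N(z)` strictly block lower triangular is a polynomial automorphism of `ℂⁿ`
with polynomial inverse, and the Jacobian of the inverse has the same form `I + Ñ(ζ)` with
`Ñ` strictly block lower triangular. -/
theorem unipotent_jacobian_polynomial_automorphism (n l : ℕ) (b : Fin n → Fin l)
    (hb : Monotone b)
    (P : Fin n → MvPolynomial (Fin n) ℂ)
    (hP0 : ∀ i, constantCoeff (P i) = 0)
    (hJac : ∀ i j, b i ≤ b j → pderiv j (P i) = if i = j then 1 else 0) :
    Function.Bijective (fun (z : Fin n → ℂ) (i : Fin n) => eval z (P i)) ∧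
    ∃ Q : Fin n → MvPolynomial (Fin n) ℂ,
      (∀ i, constantCoeff (Q i) = 0) ∧
      Function.LeftInverse (fun (ζ : Fin n → ℂ) (i : Fin n) => eval ζ (Q i))
        (fun (z : Fin n → ℂ) (i : Fin n) => eval z (P i)) ∧
      Function.RightInverse (fun (ζ : Fin n → ℂ) (i : Fin n) => eval ζ (Q i))
        (fun (z : Fin n → ℂ) (i : Fin n) => eval z (P i)) ∧
      (∀ i j, b i ≤ b j → pderiv j (Q i) = if i = j then 1 else 0) :=
  unipotent_jacobian_polynomial_automorphism_general n l b P hP0 hJac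
end
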